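/- Let d ≥ 5 be an integer and let G, H ∈ ℂ[t₀,t₁] be homogeneous of degree d−1, with coefficients G_{i,j} and H_{i,j}. Set A = t₀²t₁²·V_{d−4}. Then A + span_ℂ{t₀G, t₁G, t₀H, t₁H} = V_d if and only if the 4×4 complex matrix with rows (G_{d−1,0}, G_{d−2,1}, G_{0,d−1}, 0), (0, G_{d−1,0}, G_{1,d−2}, G_{0,d−1}), (H_{d−1,0}, H_{d−2,1}, H_{0,d−1}, 0), (0, H_{d−1,0}, H_{1,d−2}, H_{0,d−1}) has rank 4. -/

import Mathlib

open MvPolynomial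

noncomputable section

/-- `V n` is the space of homogeneous polynomials of degree `n` in `ℂ[t₀,t₁]`. -/
abbrev V (n : ℕ) : Submodule ℂ (MvPolynomial (Fin 2) ℂ) :=
  MvPolynomial.homogeneousSubmodule (Fin 2) ℂ n

/-- `coeff2 i j F` is the coefficient of the monomial `t₀^i t₁^j` in `F`. -/
def coeff2 (i j : ℕ) (F : MvPolynomial (Fin 2) ℂ) : ℂ :=
  MvPolynomial.coeff (Finsupp.single 0 i + Finsupp.single 1 j) F

namespace Prop41

/-- the four "boundary" exponents of degree `d` -/
def e (d : ℕ) : Fin 4 → (Fin 2 →₀ ℕ) :=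
  ![Finsupp.single 0 d,
    Finsupp.single 0 (d-1) + Finsupp.single 1 1,
    Finsupp.single 0 1 + Finsupp.single 1 (d-1),
    Finsupp.single 1 d]

/-- the linear map taking the four boundary coefficients -/
def φ (d : ℕ) : MvPolynomial (Fin 2) ℂ →ₗ[ℂ] (Fin 4 → ℂ) :=
  LinearMap.pi (fun j => lcoeff ℂ (e d j))

lemma φ_apply (d : ℕ) (p : MvPolynomial (Fin 2) ℂ) (j : Fin 4) :
    φ d p j = coeff (e d j) p := rfl

lemma fin2_rep (m : Fin 2 →₀ ℕ) :
    m = Finsupp.single 0 (m 0) + Finsupp.single 1 (m 1) := by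
  ext i
  fin_cases i <;> simp [Finsupp.single_apply]

lemma degree_fin2 (m : Fin 2 →₀ ℕ) : m.degree = m 0 + m 1 := by
  rw [Finsupp.degree_apply, Finset.sum_subset (Finset.subset_univ _)]
  · exact Fin.sum_univ_two m
  · intro i _ hi
    simpa using Finsupp.notMem_support_iff.mp hi

lemma e_inj {d : ℕ} (hd : 5 ≤ d) : Function.Injective (e d) := by
  intro k l h
  fin_cases k <;> fin_cases l <;> first
    | rfl
    | (exfalso
       have h0 := DFunLike.congr_fun h 0
       have h1 := DFunLike.congr_fun h 1
       simp [e, Finsupp.single_apply] at h0 h1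
       try omega)

end Prop41

namespace Prop41

lemma weight_one_fin2 (m : Fin 2 →₀ ℕ) : Finsupp.weight 1 m = m 0 + m 1 := by
  rw [← degree_fin2]
  rw [Finsupp.degree_eq_weight_one]
  rfl

lemma mem_V_iff {n : ℕ} {p : MvPolynomial (Fin 2) ℂ} :
    p ∈ V n ↔ ∀ m : Fin 2 →₀ ℕ, coeff m p ≠ 0 → m 0 + m 1 = n := by
  rw [mem_homogeneousSubmodule]
  constructor
  · intro h m hm
    have := h hm
    rwa [weight_one_fin2] at this
  · intro h m hm
    rw [weight_one_fin2]
    exact h m hm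

/-- the shift exponent (2,2) -/
def c : Fin 2 →₀ ℕ := Finsupp.single 0 2 + Finsupp.single 1 2

lemma c_apply0 : c 0 = 2 := by simp [c, Finsupp.single_apply]
lemma c_apply1 : c 1 = 2 := by simp [c, Finsupp.single_apply]

lemma hX : (X 0 : MvPolynomial (Fin 2) ℂ) ^ 2 * X 1 ^ 2 = monomial c 1 := by
  rw [X_pow_eq_monomial, X_pow_eq_monomial, monomial_mul, one_mul]
  rfl

lemma ker_mem_A {d : ℕ} (hd : 5 ≤ d) {p : MvPolynomial (Fin 2) ℂ}
    (hp : p ∈ V d) (h0 : ∀ j, coeff (e d j) p = 0) :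
    ∃ q ∈ V (d - 4), (X 0 : MvPolynomial (Fin 2) ℂ) ^ 2 * X 1 ^ 2 * q = p := by
  have hsup : ∀ m ∈ p.support, 2 ≤ m 0 ∧ 2 ≤ m 1 := by
    intro m hm
    have hc : coeff m p ≠ 0 := Finsupp.mem_support_iff.mp hm
    have hdeg : m 0 + m 1 = d := mem_V_iff.mp hp m hc
    have hne : ∀ j, m ≠ e d j := fun j hj => hc (hj ▸ h0 j)
    by_contra hcon
    rw [not_and_or] at hcon
    have key : (m 0 = 0 ∨ m 0 = 1) ∨ (m 1 = 0 ∨ m 1 = 1) := by omega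
    rcases key with (h' | h') | (h' | h')
    · exact hne 3 (by ext i; fin_cases i <;> simp [e, Finsupp.single_apply] <;> omega)
    · exact hne 2 (by ext i; fin_cases i <;> simp [e, Finsupp.single_apply] <;> omega)
    · exact hne 0 (by ext i; fin_cases i <;> simp [e, Finsupp.single_apply] <;> omega)
    · exact hne 1 (by ext i; fin_cases i <;> simp [e, Finsupp.single_apply] <;> omega)
  have hle : ∀ m ∈ p.support, c ≤ m := by
    intro m hm
    rw [Finsupp.le_def]
    intro i
    have h1 := hsup m hm
    fin_cases i <;> simp [c, Finsupp.single_apply] <;> omega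
  refine ⟨∑ m ∈ p.support, monomial (m - c) (coeff m p), ?_, ?_⟩
  · apply Submodule.sum_mem
    intro m hm
    rw [mem_homogeneousSubmodule]
    apply isHomogeneous_monomial
    rw [degree_fin2]
    have h1 := hsup m hm
    have h2 := mem_V_iff.mp hp m (Finsupp.mem_support_iff.mp hm)
    rw [Finsupp.tsub_apply, Finsupp.tsub_apply, c_apply0, c_apply1]
    omega
  · rw [hX, Finset.mul_sum]
    have : ∀ m ∈ p.support,
        monomial c (1:ℂ) * monomial (m - c) (coeff m p) = monomial m (coeff m p) := by
      intro m hm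
      rw [monomial_mul, one_mul, add_tsub_cancel_of_le (hle m hm)]
    rw [Finset.sum_congr rfl this, support_sum_monomial_coeff]

lemma not_c_le_e {d : ℕ} (hd : 5 ≤ d) (j : Fin 4) : ¬ c ≤ e d j := by
  intro h
  rw [Finsupp.le_def] at h
  have h0 := h 0
  have h1 := h 1
  simp [c, e, Finsupp.single_apply] at h0 h1
  fin_cases j <;> simp [e, Finsupp.single_apply] at h0 h1 <;> omega

lemma coeff_e_A_zero {d : ℕ} (hd : 5 ≤ d) (q : MvPolynomial (Fin 2) ℂ) (j : Fin 4) :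
    coeff (e d j) ((X 0 : MvPolynomial (Fin 2) ℂ) ^ 2 * X 1 ^ 2 * q) = 0 := by
  rw [hX, coeff_monomial_mul', if_neg (not_c_le_e hd j)]

lemma monomial_e_mem {d : ℕ} (hd : 5 ≤ d) (k : Fin 4) :
    (monomial (e d k) (1 : ℂ)) ∈ V d := by
  rw [mem_homogeneousSubmodule]
  apply isHomogeneous_monomial
  rw [degree_fin2]
  fin_cases k <;> simp [e, Finsupp.single_apply] <;> omega

lemma map_φ_V_top {d : ℕ} (hd : 5 ≤ d) : Submodule.map (φ d) (V d) = ⊤ := by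
  rw [eq_top_iff]
  rintro v -
  refine ⟨∑ k, v k • monomial (e d k) (1 : ℂ), ?_, ?_⟩
  · exact Submodule.sum_mem _ fun k _ => Submodule.smul_mem _ _ (monomial_e_mem hd k)
  · funext j
    rw [φ_apply, coeff_sum]
    rw [Finset.sum_eq_single j]
    · rw [coeff_smul, coeff_monomial, if_pos rfl]
      simp
    · intro k _ hk
      rw [coeff_smul, coeff_monomial, if_neg (fun h => hk (e_inj hd h))]
      simp
    · simp

lemma coeff2_eq (i j : ℕ) (F : MvPolynomial (Fin 2) ℂ) :
    coeff2 i j F = coeff (Finsupp.single 0 i + Finsupp.single 1 j) F := rfl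

lemma φ_X0_mul {d : ℕ} (hd : 5 ≤ d) (G : MvPolynomial (Fin 2) ℂ) :
    φ d (X 0 * G) = ![coeff2 (d-1) 0 G, coeff2 (d-2) 1 G, coeff2 0 (d-1) G, 0] := by
  funext j
  fin_cases j
  · show coeff (e d 0) (X 0 * G) = _
    rw [show e d 0 = Finsupp.single 0 1 + (Finsupp.single 0 (d-1) + Finsupp.single 1 0) by
      ext i; fin_cases i <;> simp [e, Finsupp.single_apply] <;> omega]
    rw [coeff_X_mul]
    simp [coeff2_eq]
  · show coeff (e d 1) (X 0 * G) = _
    rw [show e d 1 = Finsupp.single 0 1 + (Finsupp.single 0 (d-2) + Finsupp.single 1 1) by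
      ext i; fin_cases i <;> simp [e, Finsupp.single_apply] <;> omega]
    rw [coeff_X_mul]
    simp [coeff2_eq]
  · show coeff (e d 2) (X 0 * G) = _
    rw [show e d 2 = Finsupp.single 0 1 + (Finsupp.single 0 0 + Finsupp.single 1 (d-1)) by
      ext i; fin_cases i <;> simp [e, Finsupp.single_apply] <;> omega]
    rw [coeff_X_mul]
    simp [coeff2_eq]
  · show coeff (e d 3) (X 0 * G) = _
    rw [mul_comm, coeff_mul_X']
    rw [if_neg]
    · simp
    · simp [e, Finsupp.mem_support_iff, Finsupp.single_apply]

lemma φ_X1_mul {d : ℕ} (hd : 5 ≤ d) (G : MvPolynomial (Fin 2) ℂ) :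
    φ d (X 1 * G) = ![0, coeff2 (d-1) 0 G, coeff2 1 (d-2) G, coeff2 0 (d-1) G] := by
  funext j
  fin_cases j
  · show coeff (e d 0) (X 1 * G) = _
    rw [mul_comm, coeff_mul_X']
    rw [if_neg]
    · simp
    · simp [e, Finsupp.mem_support_iff, Finsupp.single_apply]
  · show coeff (e d 1) (X 1 * G) = _
    rw [show e d 1 = Finsupp.single 1 1 + (Finsupp.single 0 (d-1) + Finsupp.single 1 0) by
      ext i; fin_cases i <;> simp [e, Finsupp.single_apply] <;> omega]
    rw [coeff_X_mul]
    simp [coeff2_eq]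
  · show coeff (e d 2) (X 1 * G) = _
    rw [show e d 2 = Finsupp.single 1 1 + (Finsupp.single 0 1 + Finsupp.single 1 (d-2)) by
      ext i; fin_cases i <;> simp [e, Finsupp.single_apply] <;> omega]
    rw [coeff_X_mul]
    simp [coeff2_eq]
  · show coeff (e d 3) (X 1 * G) = _
    rw [show e d 3 = Finsupp.single 1 1 + (Finsupp.single 0 0 + Finsupp.single 1 (d-1)) by
      ext i; fin_cases i <;> simp [e, Finsupp.single_apply] <;> omega]
    rw [coeff_X_mul]
    simp [coeff2_eq]

lemma X_mul_mem_V {d : ℕ} (hd : 5 ≤ d) (s : Fin 2) {G : MvPolynomial (Fin 2) ℂ}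
    (hG : G ∈ V (d - 1)) : X s * G ∈ V d := by
  rw [mem_homogeneousSubmodule] at hG ⊢
  have := (isHomogeneous_X ℂ s).mul hG
  rwa [show 1 + (d - 1) = d by omega] at this

lemma A_mul_mem_V {d : ℕ} (hd : 5 ≤ d) {q : MvPolynomial (Fin 2) ℂ}
    (hq : q ∈ V (d - 4)) : (X 0 : MvPolynomial (Fin 2) ℂ) ^ 2 * X 1 ^ 2 * q ∈ V d := by
  rw [mem_homogeneousSubmodule] at hq ⊢
  have h4 : ((X 0 : MvPolynomial (Fin 2) ℂ) ^ 2 * X 1 ^ 2).IsHomogeneous 4 := by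
    rw [hX]
    apply isHomogeneous_monomial
    rw [degree_fin2, c_apply0, c_apply1]
  have := h4.mul hq
  rwa [show 4 + (d - 4) = d by omega] at this

lemma finrank_four_iff {S : Submodule ℂ (Fin 4 → ℂ)} :
    Module.finrank ℂ S = 4 ↔ S = ⊤ := by
  constructor
  · intro h
    apply Submodule.eq_top_of_finrank_eq
    rw [h, Module.finrank_fintype_fun_eq_card, Fintype.card_fin]
  · intro h
    rw [h, finrank_top, Module.finrank_fintype_fun_eq_card, Fintype.card_fin]

end Prop41

open Prop41

/-- Criterion of Case 1-2 of Proposition 4.1: with `A = t₀²t₁²·V_{d-4}`, we have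
`A + <t₀G, t₁G, t₀H, t₁H> = V_d` iff the matrix `M_Y` has rank 4. -/
theorem statement12 (d : ℕ) (hd : 5 ≤ d)
    (G H : MvPolynomial (Fin 2) ℂ)
    (hG : G ∈ V (d - 1)) (hH : H ∈ V (d - 1))
    (A : Submodule ℂ (MvPolynomial (Fin 2) ℂ))
    (hA : A = (V (d - 4)).map
        (LinearMap.mulLeft ℂ ((X 0 : MvPolynomial (Fin 2) ℂ) ^ 2 * X 1 ^ 2))) :
    (A ⊔ Submodule.span ℂ {X 0 * G, X 1 * G, X 0 * H, X 1 * H} = V d)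
      ↔ Matrix.rank
          !![coeff2 (d - 1) 0 G, coeff2 (d - 2) 1 G, coeff2 0 (d - 1) G, 0;
             0, coeff2 (d - 1) 0 G, coeff2 1 (d - 2) G, coeff2 0 (d - 1) G;
             coeff2 (d - 1) 0 H, coeff2 (d - 2) 1 H, coeff2 0 (d - 1) H, 0;
             0, coeff2 (d - 1) 0 H, coeff2 1 (d - 2) H, coeff2 0 (d - 1) H] = 4 := by
  set M : Matrix (Fin 4) (Fin 4) ℂ :=
    !![coeff2 (d - 1) 0 G, coeff2 (d - 2) 1 G, coeff2 0 (d - 1) G, 0;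
       0, coeff2 (d - 1) 0 G, coeff2 1 (d - 2) G, coeff2 0 (d - 1) G;
       coeff2 (d - 1) 0 H, coeff2 (d - 2) 1 H, coeff2 0 (d - 1) H, 0;
       0, coeff2 (d - 1) 0 H, coeff2 1 (d - 2) H, coeff2 0 (d - 1) H] with hM
  set W : Submodule ℂ (MvPolynomial (Fin 2) ℂ) :=
    Submodule.span ℂ {X 0 * G, X 1 * G, X 0 * H, X 1 * H} with hW
  -- the rows of M
  have hM0 : M 0 = φ d (X 0 * G) := by
    rw [φ_X0_mul hd]; funext j; fin_cases j <;> simp [hM]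
  have hM1 : M 1 = φ d (X 1 * G) := by
    rw [φ_X1_mul hd]; funext j; fin_cases j <;> simp [hM]
  have hM2 : M 2 = φ d (X 0 * H) := by
    rw [φ_X0_mul hd]; funext j; fin_cases j <;> simp [hM]
  have hM3 : M 3 = φ d (X 1 * H) := by
    rw [φ_X1_mul hd]; funext j; fin_cases j <;> simp [hM]
  have hrange : Set.range M = {φ d (X 0 * G), φ d (X 1 * G), φ d (X 0 * H), φ d (X 1 * H)} := by
    ext v
    constructor
    · rintro ⟨i, rfl⟩
      fin_cases i
      · show M 0 ∈ _; rw [hM0]; exact Set.mem_insert _ _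
      · show M 1 ∈ _; rw [hM1]; exact Set.mem_insert_of_mem _ (Set.mem_insert _ _)
      · show M 2 ∈ _
        rw [hM2]; exact Set.mem_insert_of_mem _ (Set.mem_insert_of_mem _ (Set.mem_insert _ _))
      · show M 3 ∈ _
        rw [hM3]
        exact Set.mem_insert_of_mem _ (Set.mem_insert_of_mem _ (Set.mem_insert_of_mem _ rfl))
    · rintro (rfl | rfl | rfl | rfl)
      exacts [⟨0, hM0⟩, ⟨1, hM1⟩, ⟨2, hM2⟩, ⟨3, hM3⟩]
  have hspan : Submodule.map (φ d) W = Submodule.span ℂ (Set.range M) := by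
    rw [hW, Submodule.map_span, hrange]
    congr 1
    rw [Set.image_insert_eq, Set.image_insert_eq, Set.image_insert_eq, Set.image_singleton]
  have hWV : W ≤ V d := by
    rw [hW, Submodule.span_le]
    rintro x (rfl | rfl | rfl | rfl)
    · exact X_mul_mem_V hd 0 hG
    · exact X_mul_mem_V hd 1 hG
    · exact X_mul_mem_V hd 0 hH
    · exact X_mul_mem_V hd 1 hH
  have hAV : A ≤ V d := by
    rw [hA]
    rintro x ⟨q, hq, rfl⟩
    exact A_mul_mem_V hd hq
  have hmapA : Submodule.map (φ d) A = ⊥ := by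
    rw [hA, Submodule.eq_bot_iff]
    rintro v ⟨x, ⟨q, hq, rfl⟩, rfl⟩
    funext j
    exact coeff_e_A_zero hd q j
  have hrank : M.rank = Module.finrank ℂ (Submodule.map (φ d) W) := by
    rw [Matrix.rank_eq_finrank_span_row, hspan]
    rfl
  constructor
  · intro h
    have h2 := congrArg (Submodule.map (φ d)) h
    rw [Submodule.map_sup, hmapA, bot_sup_eq, map_φ_V_top hd] at h2
    rw [hrank, h2]
    exact finrank_four_iff.mpr rfl
  · intro h
    rw [hrank] at h
    have htop : Submodule.map (φ d) W = ⊤ := finrank_four_iff.mp h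
    apply le_antisymm (sup_le hAV hWV)
    intro p hp
    have hv : φ d p ∈ Submodule.map (φ d) W := htop ▸ Submodule.mem_top
    obtain ⟨w, hw, hwp⟩ := hv
    have hpw : p - w ∈ V d := Submodule.sub_mem _ hp (hWV hw)
    have hker : ∀ j, coeff (e d j) (p - w) = 0 := by
      intro j
      have : φ d (p - w) = 0 := by rw [map_sub, hwp, sub_self]
      exact congrFun this j
    obtain ⟨q, hq, hqe⟩ := ker_mem_A hd hpw hker
    have hpA : p - w ∈ A := by
      rw [hA]
      exact ⟨q, hq, hqe⟩
    have := Submodule.add_mem _ (Submodule.mem_sup_left hpA) (Submodule.mem_sup_right hw)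
    rwa [sub_add_cancel] at this
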